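/- In ℤ[x] the identity D_{{0,1,3,4}}(x) = x·(x−1)⁴·(x² + 4x + 1) holds. Consequently, for any field K of characteristic zero, the roots of D_{{0,1,3,4}} in K ∖ {0,1} are exactly the elements β ∈ K with β² + 4β + 1 = 0. -/

import Mathlib

open Polynomial

universe u

/-- The 4×4 matrix `𝐌_J(x)` for `J = {a,b,c,d}` (columns in the given order),
whose column for exponent `i` is `(1, i, x^i, i·x^i)ᵀ`, and its determinant `D_J`. -/
noncomputable def Dfour (a b c d : ℕ) : Polynomial ℤ :=
  (Matrix.of fun r (j : Fin 4) =>
    ![(1 : Polynomial ℤ), ((![a,b,c,d] j : ℕ) : Polynomial ℤ),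
      X ^ (![a,b,c,d] j), ((![a,b,c,d] j : ℕ) : Polynomial ℤ) * X ^ (![a,b,c,d] j)] r).det

/- Laplace expansion along the first two rows: the minor on columns `j < k` there is
`i_k - i_j`, and its complementary minor is `(i_m - i_l) x^(i_l + i_m)`. -/
theorem Dfour_eq (a b c d : ℕ) :
    Dfour a b c d =
      ((b : ℤ[X]) - (a : ℤ[X])) * ((d : ℤ[X]) - (c : ℤ[X])) * (X ^ (a + b) + X ^ (c + d)) -
      ((c : ℤ[X]) - (a : ℤ[X])) * ((d : ℤ[X]) - (b : ℤ[X])) * (X ^ (a + c) + X ^ (b + d)) +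
      ((d : ℤ[X]) - (a : ℤ[X])) * ((c : ℤ[X]) - (b : ℤ[X])) * (X ^ (a + d) + X ^ (b + c)) := by
  rw [Dfour, Matrix.det_succ_row_zero, Fin.sum_univ_four]
  simp only [Matrix.det_fin_three, Matrix.submatrix_apply, Matrix.of_apply, Fin.succAbove,
    Fin.reduceSucc, Fin.reduceCastSucc, Fin.reduceLT, Fin.isValue, Matrix.cons_val, ite_true,
    ite_false, Fin.coe_ofNat_eq_mod]
  ring

theorem Dfour_0134_eq : Dfour 0 1 3 4 = X * (X - 1) ^ 4 * (X ^ 2 + 4 * X + 1) := by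
  rw [Dfour_eq]
  push_cast
  ring

/-- `D_{{0,1,3,4}}(x) = x (x-1)⁴ (x² + 4x + 1)` in `ℤ[x]`, and consequently
for a field `K` of characteristic zero, the roots of `D_{{0,1,3,4}}` in `K ∖ {0,1}` are
exactly the elements `β` with `β² + 4β + 1 = 0`. -/
theorem Dfour_0134_factorization :
    Dfour 0 1 3 4 = X * (X - 1) ^ 4 * (X ^ 2 + 4 * X + 1) ∧
    ∀ (K : Type u) [Field K] [CharZero K] (β : K), β ≠ 0 → β ≠ 1 →
      (Polynomial.aeval β (Dfour 0 1 3 4) = 0 ↔ β ^ 2 + 4 * β + 1 = 0) := by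
  refine ⟨Dfour_0134_eq, fun K _ _ β hβ0 hβ1 => ?_⟩
  simp [Dfour_0134_eq, hβ0, hβ1, sub_eq_zero, map_ofNat]
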